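/- arXiv:1708.06478 — 4 statements merged into one kernel-verified Lean document; each statement's English description precedes it below -/
import Mathlib

section
/- Let $X_1,\dots,X_N$ be independent Bernoulli random variables with success probabilities $p_1,\dots,p_N \in [0,1]$, and let $X = \sum_{n=1}^N X_n$ (so $X$ follows a Poisson binomial distribution). Let $\hat X$ be a binomial random variable with $N$ trials and success probability $\hat p$ satisfying $0 \le \hat p \le p_n$ for all $n$. Then for every integer $x$ with $0 \le x \le N$, $\Pr(X \ge x) \ge \Pr(\hat X \ge x)$. -/
/-!
Induct on the number of summands. Splitting on whether the new summand `Y` is zero, the tail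
of `S + Y` at `y + 1` is at least `r P(S ≥ y) + (1 - r) P(S ≥ y + 1)` with `r = P(Y ≥ 1)`,
while the tails `b_m` of `Bin(m, p̂)` satisfy `b_{m+1}(y + 1) = p̂ b_m(y) + (1 - p̂) b_m(y + 1)`.
As `b_m` is antitone in the threshold, `r ↦ r b_m(y) + (1 - r) b_m(y + 1)` is monotone, so
`r ≥ p̂` lets the inequality propagate.
-/

open MeasureTheory ProbabilityTheory Finset

noncomputable def binomialTerm (q : ℝ) (m k : ℕ) : ℝ :=
  (m.choose k : ℝ) * q ^ k * (1 - q) ^ (m - k)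

noncomputable def binomialTail (q : ℝ) (m x : ℕ) : ℝ :=
  ∑ k ∈ Icc x m, binomialTerm q m k

lemma binomialTerm_of_lt {q : ℝ} {m k : ℕ} (h : m < k) : binomialTerm q m k = 0 := by
  simp [binomialTerm, Nat.choose_eq_zero_of_lt h]

lemma binomialTerm_succ_succ (q : ℝ) (m j : ℕ) :
    binomialTerm q (m + 1) (j + 1) =
      q * binomialTerm q m j + (1 - q) * binomialTerm q m (j + 1) := by
  rcases lt_or_ge m (j + 1) with h | h
  · rw [binomialTerm_of_lt h, binomialTerm, binomialTerm, Nat.choose_succ_succ,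
      Nat.choose_eq_zero_of_lt h]
    simp only [add_zero, Nat.add_sub_add_right]
    ring
  · obtain ⟨l, rfl⟩ := Nat.exists_eq_add_of_le h
    simp only [binomialTerm, Nat.choose_succ_succ, Nat.cast_add,
      show j + 1 + l + 1 - (j + 1) = l + 1 by omega, show j + 1 + l - j = l + 1 by omega,
      show j + 1 + l - (j + 1) = l by omega]
    ring

lemma binomialTail_zero_right (q : ℝ) (m : ℕ) : binomialTail q m 0 = 1 := by
  have h := (add_pow q (1 - q) m).symm
  rw [add_sub_cancel, one_pow] at h
  rw [← h, binomialTail, ← Ico_add_one_right_eq_Icc, Nat.Ico_zero_eq_range]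
  exact sum_congr rfl fun k _ => by rw [binomialTerm]; ring

lemma binomialTail_zero_succ (q : ℝ) (y : ℕ) : binomialTail q 0 (y + 1) = 0 := by
  simp [binomialTail]

lemma binomialTail_succ_le {q : ℝ} (hq0 : 0 ≤ q) (hq1 : q ≤ 1) (m x : ℕ) :
    binomialTail q m (x + 1) ≤ binomialTail q m x := by
  refine sum_le_sum_of_subset_of_nonneg (Icc_subset_Icc_left x.le_succ) fun k _ _ => ?_
  have : 0 ≤ 1 - q := sub_nonneg.mpr hq1
  unfold binomialTerm
  positivity

lemma binomialTail_succ_succ (q : ℝ) (m y : ℕ) :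
    binomialTail q (m + 1) (y + 1) =
      q * binomialTail q m y + (1 - q) * binomialTail q m (y + 1) := by
  have hshift (f : ℕ → ℝ) :
      ∑ k ∈ Icc (y + 1) (m + 1), f k = ∑ j ∈ Icc y m, f (j + 1) := by
    rw [← map_add_right_Icc, sum_map]
    rfl
  have htop : ∑ j ∈ Icc y m, binomialTerm q m (j + 1) = binomialTail q m (y + 1) := by
    rw [← hshift]
    exact (sum_subset (Icc_subset_Icc_right m.le_succ) fun k hk hk' =>
      binomialTerm_of_lt (by simp only [mem_Icc] at hk hk'; omega)).symm
  rw [binomialTail, hshift]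
  simp only [binomialTerm_succ_succ, sum_add_distrib, ← mul_sum, htop]
  rfl

lemma binomialTail_succ_succ_le {q r : ℝ} (hq : 0 ≤ q) (hqr : q ≤ r) (hr : r ≤ 1)
    (m y : ℕ) :
    binomialTail q (m + 1) (y + 1) ≤
      r * binomialTail q m y + (1 - r) * binomialTail q m (y + 1) := by
  have := binomialTail_succ_le hq (hqr.trans hr) m y
  rw [binomialTail_succ_succ]
  nlinarith

section Probability

variable {Ω : Type*} [MeasurableSpace Ω] {μ : Measure Ω} [IsProbabilityMeasure μ]

lemma ProbabilityTheory.IndepFun.mul_measureReal_add_le_measureReal_succ_le_add {S Y : Ω → ℕ}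
    (hS : Measurable S) (hY : Measurable Y) (hSY : IndepFun S Y μ) (y : ℕ) :
    μ.real {ω | 1 ≤ Y ω} * μ.real {ω | y ≤ S ω} +
        (1 - μ.real {ω | 1 ≤ Y ω}) * μ.real {ω | y + 1 ≤ S ω} ≤
      μ.real {ω | y + 1 ≤ S ω + Y ω} := by
  set A : Set Ω := Y ⁻¹' {k | 1 ≤ k}
  have hA : MeasurableSet A := hY MeasurableSet.of_discrete
  have hprod (t u : Set ℕ) :
      μ.real (S ⁻¹' t ∩ Y ⁻¹' u) = μ.real (S ⁻¹' t) * μ.real (Y ⁻¹' u) := by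
    simp only [measureReal_def, hSY.measure_inter_preimage_eq_mul t u MeasurableSet.of_discrete
      MeasurableSet.of_discrete, ENNReal.toReal_mul]
  have hsub : (S ⁻¹' {k | y ≤ k} ∩ A) ∪ (S ⁻¹' {k | y + 1 ≤ k} ∩ Aᶜ) ⊆
      {ω | y + 1 ≤ S ω + Y ω} := by
    rintro ω (⟨hSω, hYω⟩ | ⟨hSω, -⟩)
    · exact Nat.add_le_add hSω hYω
    · exact le_add_right (show y + 1 ≤ S ω from hSω)
  have hdisj : Disjoint (S ⁻¹' {k | y ≤ k} ∩ A) (S ⁻¹' {k | y + 1 ≤ k} ∩ Aᶜ) :=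
    disjoint_compl_right.mono Set.inter_subset_right Set.inter_subset_right
  calc μ.real A * μ.real (S ⁻¹' {k | y ≤ k}) +
        (1 - μ.real A) * μ.real (S ⁻¹' {k | y + 1 ≤ k})
      = μ.real ((S ⁻¹' {k | y ≤ k} ∩ A) ∪ (S ⁻¹' {k | y + 1 ≤ k} ∩ Aᶜ)) := by
        rw [measureReal_union hdisj ((hS MeasurableSet.of_discrete).inter hA.compl),
          ← probReal_compl_eq_one_sub hA, hprod, ← Set.preimage_compl, hprod]
        ring
    _ ≤ μ.real {ω | y + 1 ≤ S ω + Y ω} := measureReal_mono hsub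

theorem binomialTail_le_measureReal_le_sum {ι : Type*} {X : ι → Ω → ℕ}
    (hmeas : ∀ i, Measurable (X i)) (hindep : iIndepFun X μ) {q : ℝ} (hq : 0 ≤ q)
    (hqX : ∀ i, q ≤ μ.real {ω | 1 ≤ X i ω}) (s : Finset ι) (x : ℕ) :
    binomialTail q #s x ≤ μ.real {ω | x ≤ ∑ i ∈ s, X i ω} := by
  classical
  induction s using Finset.cons_induction generalizing x with
  | empty =>
    cases x with
    | zero => simp [binomialTail_zero_right]
    | succ y => simp [binomialTail_zero_succ]
  | cons i s hi ih =>
    cases x with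
    | zero => simp [binomialTail_zero_right]
    | succ y =>
      have hSi := hindep.indepFun_finsetSum_of_notMem hmeas hi
      rw [sum_fn] at hSi
      set r := μ.real {ω | 1 ≤ X i ω}
      calc binomialTail q #(cons i s hi) (y + 1)
          ≤ r * binomialTail q #s y + (1 - r) * binomialTail q #s (y + 1) := by
            rw [card_cons]
            exact binomialTail_succ_succ_le hq (hqX i) measureReal_le_one _ _
        _ ≤ r * μ.real {ω | y ≤ ∑ j ∈ s, X j ω} +
              (1 - r) * μ.real {ω | y + 1 ≤ ∑ j ∈ s, X j ω} := by
            have : 0 ≤ 1 - r := sub_nonneg.mpr measureReal_le_one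
            gcongr
            exacts [ih y, ih (y + 1)]
        _ ≤ μ.real {ω | y + 1 ≤ ∑ j ∈ cons i s hi, X j ω} := by
            simp_rw [sum_cons, add_comm (X i _)]
            exact hSi.mul_measureReal_add_le_measureReal_succ_le_add
                (s.measurable_sum fun j _ => hmeas j) (hmeas i) y

end Probability

theorem poisson_binomial_tail_ge_binomial_tail_general
    {Ω : Type*} [MeasurableSpace Ω] (μ : Measure Ω) [IsProbabilityMeasure μ]
    (N : ℕ) (X : Fin N → Ω → ℕ) (p : Fin N → ℝ)
    (hmeas : ∀ n, Measurable (X n))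
    (hindep : iIndepFun X μ)
    (hBern : ∀ n, (μ {ω | X n ω = 1}).toReal = p n)
    (phat : ℝ) (hphat0 : 0 ≤ phat) (hphatle : ∀ n, phat ≤ p n)
    (x : ℕ) :
    (μ {ω | x ≤ ∑ n, X n ω}).toReal ≥
      ∑ k ∈ Finset.Icc x N, (N.choose k : ℝ) * phat ^ k * (1 - phat) ^ (N - k) := by
  have hsucc : ∀ n, phat ≤ μ.real {ω | 1 ≤ X n ω} := fun n =>
    (hphatle n).trans <| hBern n ▸ measureReal_mono fun ω (h : X n ω = 1) => h.ge
  simpa [binomialTail, binomialTerm, measureReal_def] using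
    binomialTail_le_measureReal_le_sum hmeas hindep hphat0 hsucc univ x

/-- **Lemma 1 of the paper.** The tail (ccdf) of a Poisson binomial random variable
`X = ∑ Xₙ`, with independent Bernoulli summands of success probabilities `pₙ`,
dominates the tail of a binomial random variable with the same number `N` of trials
and success probability `p̂ ≤ pₙ` for all `n`.  The binomial tail probability
`Pr(X̂ ≥ x)` is written out explicitly as `∑_{k=x}^{N} C(N,k) p̂^k (1-p̂)^(N-k)`. -/
theorem poisson_binomial_tail_ge_binomial_tail
    {Ω : Type*} [MeasurableSpace Ω] (μ : Measure Ω) [IsProbabilityMeasure μ]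
    (N : ℕ) (X : Fin N → Ω → ℕ) (p : Fin N → ℝ)
    (hp0 : ∀ n, 0 ≤ p n) (hp1 : ∀ n, p n ≤ 1)
    (hmeas : ∀ n, Measurable (X n))
    (hindep : iIndepFun X μ)
    (hval : ∀ n ω, X n ω = 0 ∨ X n ω = 1)
    (hBern : ∀ n, (μ {ω | X n ω = 1}).toReal = p n)
    (phat : ℝ) (hphat0 : 0 ≤ phat) (hphatle : ∀ n, phat ≤ p n)
    (x : ℕ) (hx : x ≤ N) :
    (μ {ω | x ≤ ∑ n, X n ω}).toReal ≥
      ∑ k ∈ Finset.Icc x N, (N.choose k : ℝ) * phat ^ k * (1 - phat) ^ (N - k) :=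
  poisson_binomial_tail_ge_binomial_tail_general μ N X p hmeas hindep hBern phat hphat0 hphatle x
end

section
/- Let $K \ge 2$ and let $d : \mathrm{Fin}\,K \to \mathrm{Fin}\,K \to \mathbb{R}$ be a nonnegative distance function. Extend $d$ to $d'$ on $K+1$ vertices by adding a dummy vertex whose distance to and from every original vertex is $0$ (and $d'$ agrees with $d$ on the original vertices). Then the minimum over all Hamiltonian cycles on the $K+1$ vertices of the total cycle length under $d'$ equals the minimum over all Hamiltonian paths on the original $K$ vertices (i.e., over all orderings $\sigma$ of $\mathrm{Fin}\,K$, with cost $\sum_{i=0}^{K-2} d(\sigma(i), \sigma(i+1))$) of the total path length under $d$. -/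
/-- Cost of the Hamiltonian path visiting the vertices of `Fin K` in the order
`σ 0, σ 1, …, σ (K-1)`: the sum of the distances between consecutive vertices. -/
noncomputable def pathCost {K : ℕ} (d : Fin K → Fin K → ℝ) (σ : Equiv.Perm (Fin K)) : ℝ :=
  ∑ i : Fin K, if h : (i : ℕ) + 1 < K then d (σ i) (σ ⟨(i : ℕ) + 1, h⟩) else 0

/-- Cost of the Hamiltonian cycle visiting the vertices of `Fin (K+1)` in the order
`σ 0, σ 1, …, σ K, σ 0`: the sum of the distances between consecutive vertices,
including the closing edge back to the start (`i + 1` wraps around in `Fin (K+1)`). -/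
noncomputable def cycleCost {K : ℕ} (d : Fin (K + 1) → Fin (K + 1) → ℝ)
    (σ : Equiv.Perm (Fin (K + 1))) : ℝ :=
  ∑ i : Fin (K + 1), d (σ i) (σ (i + 1))

/-!
A tour of the `K + 1` cities may be rotated so that it visits the dummy city `Fin.last K`
last; rotation does not change its cost. A tour ending at the dummy city is a Hamiltonian
path `σ` on the original cities followed by the two free edges into and out of the dummy,
so it costs exactly `pathCost d σ`. Hence both minima are taken over the same set of values.
-/

namespace Equiv.Perm

variable {K : ℕ}

def castSuccPerm (σ : Perm (Fin K)) : Perm (Fin (K + 1)) :=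
  σ.extendDomain (finSuccAboveEquiv (Fin.last K))

@[simp]
theorem castSuccPerm_apply_castSucc (σ : Perm (Fin K)) (i : Fin K) :
    castSuccPerm σ i.castSucc = (σ i).castSucc := by
  simpa [castSuccPerm, finSuccAboveEquiv_apply] using
    σ.extendDomain_apply_image (finSuccAboveEquiv (Fin.last K)) i

@[simp]
theorem castSuccPerm_apply_last (σ : Perm (Fin K)) : castSuccPerm σ (Fin.last K) = Fin.last K :=
  σ.extendDomain_apply_not_subtype _ (not_not.mpr rfl)

theorem exists_castSuccPerm_eq {τ : Perm (Fin (K + 1))} (hτ : τ (Fin.last K) = Fin.last K) :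
    ∃ σ : Perm (Fin K), castSuccPerm σ = τ := by
  have hτ' : ∀ x, τ x ≠ Fin.last K ↔ x ≠ Fin.last K := fun x => by
    rw [← hτ, τ.injective.ne_iff, hτ]
  refine ⟨(finSuccAboveEquiv (Fin.last K)).symm.permCongr (τ.subtypePerm hτ'), ?_⟩
  ext x
  induction x using Fin.lastCases with
  | last => simp [hτ]
  | cast i => simp [permCongr_apply, finSuccAboveEquiv_apply, finSuccAboveEquiv_symm_apply_last]

end Equiv.Perm

open Equiv Perm

theorem cycleCost_mul_addRight {K : ℕ} (d : Fin (K + 1) → Fin (K + 1) → ℝ)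
    (τ : Perm (Fin (K + 1))) (c : Fin (K + 1)) :
    cycleCost d (τ * Equiv.addRight c) = cycleCost d τ :=
  Fintype.sum_equiv (Equiv.addRight c) _ _ fun i => by simp [add_right_comm]

theorem exists_mul_addRight_apply_last {K : ℕ} (τ : Perm (Fin (K + 1))) :
    ∃ c, (τ * Equiv.addRight c : Perm (Fin (K + 1))) (Fin.last K) = Fin.last K :=
  ⟨τ⁻¹ (Fin.last K) - Fin.last K, by simp⟩

theorem range_cycleCost_castSuccPerm {K : ℕ} (d : Fin (K + 1) → Fin (K + 1) → ℝ) :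
    Set.range (fun σ : Perm (Fin K) => cycleCost d (castSuccPerm σ)) =
      Set.range (cycleCost d) := by
  refine (Set.range_comp_subset_range castSuccPerm (cycleCost d)).antisymm ?_
  rintro _ ⟨τ, rfl⟩
  obtain ⟨c, hc⟩ := exists_mul_addRight_apply_last τ
  obtain ⟨σ, hσ⟩ := exists_castSuccPerm_eq hc
  exact ⟨σ, by rw [Function.comp_apply, hσ, cycleCost_mul_addRight]⟩

theorem cycleCost_castSuccPerm {K : ℕ} (hK : 0 < K) {d : Fin K → Fin K → ℝ}
    {d' : Fin (K + 1) → Fin (K + 1) → ℝ}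
    (horig : ∀ i j : Fin K, d' i.castSucc j.castSucc = d i j)
    (hto : ∀ i : Fin K, d' i.castSucc (Fin.last K) = 0)
    (hfrom : ∀ i : Fin K, d' (Fin.last K) i.castSucc = 0) (σ : Perm (Fin K)) :
    cycleCost d' (castSuccPerm σ) = pathCost d σ := by
  have hwrap : Fin.last K + 1 = (⟨0, hK⟩ : Fin K).castSucc := by simp
  rw [cycleCost, Fin.sum_univ_castSucc, hwrap, castSuccPerm_apply_last,
    castSuccPerm_apply_castSucc, hfrom, add_zero, pathCost]
  refine Finset.sum_congr rfl fun j _ => ?_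
  rw [Fin.coeSucc_eq_succ, castSuccPerm_apply_castSucc]
  split_ifs with h
  · rw [show j.succ = (⟨j + 1, h⟩ : Fin K).castSucc from Fin.ext rfl, castSuccPerm_apply_castSucc,
      horig]
  · rw [show j.succ = Fin.last K from Fin.ext (by simp; omega), castSuccPerm_apply_last, hto]

theorem tsp_dummy_free_endpoints_general
    (K : ℕ) (hK : 2 ≤ K) (d : Fin K → Fin K → ℝ)
    (d' : Fin (K + 1) → Fin (K + 1) → ℝ)
    (horig : ∀ i j : Fin K, d' i.castSucc j.castSucc = d i j)
    (hto : ∀ i : Fin K, d' i.castSucc (Fin.last K) = 0)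
    (hfrom : ∀ i : Fin K, d' (Fin.last K) i.castSucc = 0) :
    (⨅ σ : Equiv.Perm (Fin (K + 1)), cycleCost d' σ)
      = ⨅ σ : Equiv.Perm (Fin K), pathCost d σ := by
  have hcost : ∀ σ, cycleCost d' (castSuccPerm σ) = pathCost d σ :=
    cycleCost_castSuccPerm (by omega) horig hto hfrom
  simp_rw [← hcost]
  exact congrArg sInf (range_cycleCost_castSuccPerm d').symm

/-- **Appendix C of the paper, variation `NoReturn-ArbitraryOriginAndEnd`.**
For `K ≥ 2` cities with nonnegative distances `d`, extend `d` to `d'` by adding a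
dummy city (the vertex `Fin.last K`) whose distance to and from every original city
is `0`.  Then the minimum total length over all Hamiltonian cycles on the `K+1`
cities under `d'` equals the minimum total length over all Hamiltonian paths on the
original `K` cities (with free endpoints) under `d`. -/
theorem tsp_dummy_free_endpoints
    (K : ℕ) (hK : 2 ≤ K) (d : Fin K → Fin K → ℝ) (hd : ∀ i j, 0 ≤ d i j)
    (d' : Fin (K + 1) → Fin (K + 1) → ℝ)
    (horig : ∀ i j : Fin K, d' i.castSucc j.castSucc = d i j)
    (hto : ∀ i : Fin K, d' i.castSucc (Fin.last K) = 0)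
    (hfrom : ∀ i : Fin K, d' (Fin.last K) i.castSucc = 0) :
    (⨅ σ : Equiv.Perm (Fin (K + 1)), cycleCost d' σ)
      = ⨅ σ : Equiv.Perm (Fin K), pathCost d σ :=
  tsp_dummy_free_endpoints_general K hK d d' horig hto hfrom
end

section
/- Let $K \ge 3$, let $d : \mathrm{Fin}\,K \to \mathrm{Fin}\,K \to \mathbb{R}$ be a nonnegative symmetric distance function, and let $A \ne B$ be two vertices. Let $M > \sum_{i,j} d(i,j)$. Extend $d$ to $d'$ on $K+1$ vertices by adding a dummy vertex whose distance to and from $A$ and $B$ is $0$ and whose distance to and from every other vertex is $M$. Then the minimum over all Hamiltonian cycles on the $K+1$ vertices of the total cycle length under $d'$ equals the minimum over all Hamiltonian paths on the original $K$ vertices that start at $A$ and end at $B$ of the total path length under $d$. -/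
open Equiv

theorem pathCost_nonneg {K : ℕ} {d : Fin K → Fin K → ℝ} (hd : ∀ i j, 0 ≤ d i j)
    (σ : Perm (Fin K)) : 0 ≤ pathCost d σ :=
  Finset.sum_nonneg fun i _ => by split <;> simp [hd]

theorem pathCost_le_sum_dist {K : ℕ} {d : Fin K → Fin K → ℝ} (hd : ∀ i j, 0 ≤ d i j)
    (σ : Perm (Fin K)) : pathCost d σ ≤ ∑ i, ∑ j, d i j :=
  calc pathCost d σ ≤ ∑ i, ∑ j, d (σ i) j := by
        refine Finset.sum_le_sum fun i _ => ?_
        split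
        · exact Finset.single_le_sum (fun j _ => hd (σ i) j) (Finset.mem_univ _)
        · exact Finset.sum_nonneg fun j _ => hd _ _
    _ = ∑ i, ∑ j, d i j := Equiv.sum_comp σ fun i => ∑ j, d i j

theorem pathCost_eq_sum {n : ℕ} (d : Fin (n + 1) → Fin (n + 1) → ℝ) (σ : Perm (Fin (n + 1))) :
    pathCost d σ = ∑ i : Fin n, d (σ i.castSucc) (σ i.succ) := by
  simp [pathCost, Fin.sum_univ_castSucc, Fin.succ]

theorem pathCost_revPerm_trans {n : ℕ} {d : Fin (n + 1) → Fin (n + 1) → ℝ}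
    (hsymm : ∀ i j, d i j = d j i) (σ : Perm (Fin (n + 1))) :
    pathCost d (Fin.revPerm.trans σ) = pathCost d σ := by
  simp only [pathCost_eq_sum, trans_apply, Fin.revPerm_apply, Fin.rev_castSucc, Fin.rev_succ]
  rw [← Equiv.sum_comp Fin.revPerm]
  simp [hsymm]

theorem cycleCost_addLeft_trans {n : ℕ} (d : Fin (n + 1) → Fin (n + 1) → ℝ)
    (τ : Perm (Fin (n + 1))) (c : Fin (n + 1)) :
    cycleCost d ((Equiv.addLeft c).trans τ) = cycleCost d τ := by
  simp only [cycleCost, trans_apply, coe_addLeft, ← add_assoc]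
  exact Equiv.sum_comp (Equiv.addLeft c) fun i => d (τ i) (τ (i + 1))

noncomputable def extendFixingLast {n : ℕ} (σ : Perm (Fin n)) : Perm (Fin (n + 1)) :=
  finSuccEquivLast.symm.permCongr σ.optionCongr

@[simp]
theorem extendFixingLast_castSucc {n : ℕ} (σ : Perm (Fin n)) (i : Fin n) :
    extendFixingLast σ i.castSucc = (σ i).castSucc := by
  simp [extendFixingLast, Equiv.permCongr_apply]

@[simp]
theorem extendFixingLast_last {n : ℕ} (σ : Perm (Fin n)) :
    extendFixingLast σ (Fin.last n) = Fin.last n := by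
  simp [extendFixingLast, Equiv.permCongr_apply]

theorem exists_extendFixingLast_eq {n : ℕ} {τ : Perm (Fin (n + 1))}
    (hτ : τ (Fin.last n) = Fin.last n) : ∃ σ, extendFixingLast σ = τ := by
  set e : Perm (Option (Fin n)) := finSuccEquivLast.permCongr τ
  have he : e none = none := by simp [e, Equiv.permCongr_apply, hτ]
  refine ⟨removeNone e, ?_⟩
  rw [extendFixingLast, map_equiv_removeNone, he, swap_self, ← Perm.one_def, one_mul]
  ext1 x
  simp [e, Equiv.permCongr_apply]

theorem exists_cycleCost_eq_extendFixingLast {n : ℕ} (d : Fin (n + 1) → Fin (n + 1) → ℝ)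
    (τ : Perm (Fin (n + 1))) : ∃ σ, cycleCost d τ = cycleCost d (extendFixingLast σ) := by
  obtain ⟨σ, hσ⟩ := exists_extendFixingLast_eq
    (τ := (Equiv.addLeft (τ.symm (Fin.last n) - Fin.last n)).trans τ) (by simp)
  exact ⟨σ, by rw [hσ, cycleCost_addLeft_trans]⟩

theorem cycleCost_extendFixingLast {n : ℕ} {d' : Fin (n + 1 + 1) → Fin (n + 1 + 1) → ℝ}
    {d : Fin (n + 1) → Fin (n + 1) → ℝ} (h : ∀ i j : Fin (n + 1), d' i.castSucc j.castSucc = d i j)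
    (σ : Perm (Fin (n + 1))) :
    cycleCost d' (extendFixingLast σ) = pathCost d σ
      + d' (σ (Fin.last n)).castSucc (Fin.last _) + d' (Fin.last _) (σ 0).castSucc := by
  simp only [cycleCost, Fin.sum_univ_castSucc, extendFixingLast_castSucc, Fin.coeSucc_eq_succ,
    Fin.succ_castSucc, h, Fin.succ_last, extendFixingLast_last, Fin.last_add_one, pathCost_eq_sum,
    add_right_inj]
  rw [← Fin.castSucc_zero (n := n + 1), extendFixingLast_castSucc]

theorem exists_perm_apply_eq_and_apply_eq {α : Type*} [DecidableEq α] {i j a b : α}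
    (hij : i ≠ j) (hab : a ≠ b) : ∃ σ : Perm α, σ i = a ∧ σ j = b := by
  set τ := swap i a
  have hτj : τ j ≠ a := fun h => hij (τ.injective (by rw [h, swap_apply_left]))
  exact ⟨τ.trans (swap b (τ j)), by simp [τ, swap_apply_of_ne_of_ne hab hτj.symm], by simp⟩

abbrev HamPath (n : ℕ) (A B : Fin (n + 1)) : Type :=
  {σ : Perm (Fin (n + 1)) // σ 0 = A ∧ σ (Fin.last n) = B}

theorem Fin.zero_ne_last_of_ne {n : ℕ} {a b : Fin (n + 1)} (hab : a ≠ b) :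
    (0 : Fin (n + 1)) ≠ Fin.last n := by
  rw [Ne, Fin.zero_eq_last_iff]
  rintro rfl
  exact hab (Subsingleton.elim (α := Fin 1) a b)

theorem HamPath.nonempty {n : ℕ} {A B : Fin (n + 1)} (hAB : A ≠ B) : Nonempty (HamPath n A B) :=
  let ⟨σ, hσ⟩ := exists_perm_apply_eq_and_apply_eq (Fin.zero_ne_last_of_ne hAB) hAB
  ⟨σ, hσ⟩

structure IsDummyExtension {K : ℕ} (d : Fin K → Fin K → ℝ) (A B : Fin K) (M : ℝ)
    (d' : Fin (K + 1) → Fin (K + 1) → ℝ) : Prop where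
  castSucc_castSucc : ∀ i j : Fin K, d' i.castSucc j.castSucc = d i j
  origin : d' A.castSucc (Fin.last K) = 0 ∧ d' (Fin.last K) A.castSucc = 0
  terminus : d' B.castSucc (Fin.last K) = 0 ∧ d' (Fin.last K) B.castSucc = 0
  other : ∀ i : Fin K, i ≠ A → i ≠ B →
    d' i.castSucc (Fin.last K) = M ∧ d' (Fin.last K) i.castSucc = M

namespace IsDummyExtension

section

variable {K : ℕ} {d : Fin K → Fin K → ℝ} {A B : Fin K} {M : ℝ}
  {d' : Fin (K + 1) → Fin (K + 1) → ℝ}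

theorem dummy_edges_nonneg (h : IsDummyExtension d A B M d') (hM : 0 ≤ M) (x : Fin K) :
    0 ≤ d' x.castSucc (Fin.last K) ∧ 0 ≤ d' (Fin.last K) x.castSucc := by
  by_cases hxA : x = A
  · simp [hxA, h.origin]
  by_cases hxB : x = B
  · simp [hxB, h.terminus]
  · simp [h.other x hxA hxB, hM]

theorem le_dummy_edges (h : IsDummyExtension d A B M d') (hM : 0 ≤ M) {a b : Fin K}
    (hab : a ≠ b) (hAB : ¬(a = A ∧ b = B)) (hBA : ¬(a = B ∧ b = A)) :
    M ≤ d' b.castSucc (Fin.last K) + d' (Fin.last K) a.castSucc := by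
  by_cases ha : a = A ∨ a = B
  · have hb : b ≠ A ∧ b ≠ B := by grind
    linarith [(h.other b hb.1 hb.2).1, (h.dummy_edges_nonneg hM a).2]
  · rw [not_or] at ha
    linarith [(h.other a ha.1 ha.2).2, (h.dummy_edges_nonneg hM b).1]

end

section

variable {n : ℕ} {d : Fin (n + 1) → Fin (n + 1) → ℝ} {A B : Fin (n + 1)} {M : ℝ}
  {d' : Fin (n + 1 + 1) → Fin (n + 1 + 1) → ℝ}

theorem cycleCost_extendFixingLast_eq_pathCost (h : IsDummyExtension d A B M d')
    (p : HamPath n A B) : cycleCost d' (extendFixingLast p.1) = pathCost d p.1 := by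
  rw [_root_.cycleCost_extendFixingLast h.castSucc_castSucc, p.2.1, p.2.2, h.terminus.1,
    h.origin.2, add_zero, add_zero]

theorem iInf_pathCost_le_cycleCost (h : IsDummyExtension d A B M d') (hd : ∀ i j, 0 ≤ d i j)
    (hsymm : ∀ i j, d i j = d j i) (hAB : A ≠ B) (hM : ∑ i, ∑ j, d i j < M)
    (σ : Perm (Fin (n + 1))) :
    ⨅ p : HamPath n A B, pathCost d p.1 ≤ cycleCost d' (extendFixingLast σ) := by
  have hmin (p : HamPath n A B) : ⨅ p : HamPath n A B, pathCost d p.1 ≤ pathCost d p.1 :=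
    ciInf_le (Finite.bddBelow_range _) p
  by_cases hσ : σ 0 = A ∧ σ (Fin.last n) = B
  · exact (hmin ⟨σ, hσ⟩).trans_eq
      (h.cycleCost_extendFixingLast_eq_pathCost ⟨σ, hσ⟩).symm
  by_cases hσ' : σ 0 = B ∧ σ (Fin.last n) = A
  · have hrev : (Fin.revPerm.trans σ) 0 = A ∧ (Fin.revPerm.trans σ) (Fin.last n) = B := by
      simp [hσ']
    rw [_root_.cycleCost_extendFixingLast h.castSucc_castSucc, hσ'.1, hσ'.2, h.origin.1,
      h.terminus.2, add_zero, add_zero, ← pathCost_revPerm_trans hsymm]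
    exact hmin ⟨_, hrev⟩
  obtain ⟨p₀⟩ := HamPath.nonempty hAB
  have hM0 : 0 ≤ M :=
    (Finset.sum_nonneg fun i _ => Finset.sum_nonneg fun j _ => hd i j).trans hM.le
  have hdummy := h.le_dummy_edges hM0 (σ.injective.ne (Fin.zero_ne_last_of_ne hAB)) hσ hσ'
  rw [_root_.cycleCost_extendFixingLast h.castSucc_castSucc]
  linarith [hmin p₀, pathCost_le_sum_dist hd p₀.1, pathCost_nonneg hd σ]

end

end IsDummyExtension

/-- **Appendix C of the paper, variation `NoReturn-GivenOriginAndEnd`.**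
For `K ≥ 3` cities with nonnegative symmetric distances `d`, two distinct cities
`A ≠ B`, and `M` larger than the sum of all pairwise distances, extend `d` to `d'`
by adding a dummy city (the vertex `Fin.last K`) at distance `0` to and from `A` and
`B` and at distance `M` to and from every other city.  Then the minimum total length
over all Hamiltonian cycles on the `K+1` cities under `d'` equals the minimum total
length over all Hamiltonian paths on the original `K` cities starting at `A` and
ending at `B` under `d`. -/
theorem tsp_dummy_given_origin_and_end
    (K : ℕ) (hK : 3 ≤ K) (d : Fin K → Fin K → ℝ)
    (hd : ∀ i j, 0 ≤ d i j) (hsymm : ∀ i j, d i j = d j i)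
    (A B : Fin K) (hAB : A ≠ B)
    (M : ℝ) (hM : (∑ i : Fin K, ∑ j : Fin K, d i j) < M)
    (d' : Fin (K + 1) → Fin (K + 1) → ℝ)
    (horig : ∀ i j : Fin K, d' i.castSucc j.castSucc = d i j)
    (hA : d' A.castSucc (Fin.last K) = 0 ∧ d' (Fin.last K) A.castSucc = 0)
    (hB : d' B.castSucc (Fin.last K) = 0 ∧ d' (Fin.last K) B.castSucc = 0)
    (hother : ∀ i : Fin K, i ≠ A → i ≠ B →
      d' i.castSucc (Fin.last K) = M ∧ d' (Fin.last K) i.castSucc = M) :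
    (⨅ σ : Equiv.Perm (Fin (K + 1)), cycleCost d' σ)
      = ⨅ σ : {σ : Equiv.Perm (Fin K) //
          σ ⟨0, by omega⟩ = A ∧ σ ⟨K - 1, by omega⟩ = B},
          pathCost d σ.val := by
  obtain ⟨n, rfl⟩ : ∃ n, K = n + 1 := ⟨K - 1, by omega⟩
  have hext : IsDummyExtension d A B M d' := ⟨horig, hA, hB, hother⟩
  -- `⟨n + 1 - 1, _⟩` unfolds to `Fin.last n`, so the index type is `HamPath n A B` up to defeq
  change _ = ⨅ p : HamPath n A B, pathCost d p.1
  have := HamPath.nonempty hAB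
  apply le_antisymm
  · exact le_ciInf fun p => (ciInf_le (Finite.bddBelow_range _) _).trans_eq
      (hext.cycleCost_extendFixingLast_eq_pathCost p)
  · refine le_ciInf fun τ => ?_
    obtain ⟨σ, hσ⟩ := exists_cycleCost_eq_extendFixingLast d' τ
    exact hσ ▸ hext.iInf_pathCost_le_cycleCost hd hsymm hAB hM σ
end

section
/- Let $K$ be a natural number, $w : \mathrm{Fin}\,K \to \mathbb{R}^2$ (locations of the ground terminals), $D \ge 0$, $T_{\min} \ge 0$, $V > 0$ and $T > 0$. Let $q : [0,T] \to \mathbb{R}^2$ be $V$-Lipschitz, suppose that for every $k$ the Lebesgue measure of $\{t \in [0,T] : \|q(t) - w(k)\| \le D\}$ is at least $T_{\min}$, and suppose there exist finitely many times $0 = t_0 < t_1 < \dots < t_{L+1} = T$ such that for each $l \in \{1,\dots,L+1\}$ the set $\{k : \|q(t) - w(k)\| \le D\}$ is the same for all $t$ in the half-open interval $[t_{l-1}, t_l)$. Then there exist $\hat T \in (0, T]$ and a map $\hat q : [0,\hat T] \to \mathbb{R}^2$ that is $V$-Lipschitz and piecewise affine (i.e., there are finitely many times $0 = s_0 < s_1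 < \dots < s_J = \hat T$ such that $\hat q$ is affine on each interval $[s_{j-1}, s_j]$) such that for every $k$ the Lebesgue measure of $\{t \in [0,\hat T] : \|\hat q(t) - w(k)\| \le D\}$ is at least $T_{\min}$. -/
/-!
Interpolate `q` linearly between consecutive switching times `ts l`. Each chord has speed at
most `V` because `q` is `V`-Lipschitz, and chords glued at common endpoints form a `V`-Lipschitz
path. If terminal `k` is connected at some time of `[ts l, ts (l + 1))`, it is connected on the
whole interval and, by continuity, at `ts (l + 1)`; since the disc of radius `D` about `w k` is
convex, the chord stays in it over the entire piece. Hence, up to the null set `{T}`, the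
connection times of `q` are connection times of the interpolant, and `T̂ = T` works.
-/

open MeasureTheory Set

lemma monotoneOn_Iic_of_lt_add_one {β : Type*} [Preorder β] {u : ℕ → β} {n : ℕ}
    (hu : ∀ l < n, u l < u (l + 1)) : MonotoneOn u (Iic n) :=
  (strictMonoOn_Iic_of_lt_succ fun m hm => by simpa using hu m hm).monotoneOn

lemma volume_sep_Icc_mono {a b : ℝ} {P Q : ℝ → Prop} (h : ∀ t ∈ Ico a b, P t → Q t) :
    volume {t ∈ Icc a b | P t} ≤ volume {t ∈ Icc a b | Q t} := by
  refine measure_mono_ae (ae_le_set.2 (measure_mono_null ?_ (measure_singleton b)))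
  rintro t ⟨⟨ht, hP⟩, hQ⟩
  by_contra htb
  exact hQ ⟨ht, h t ⟨ht.1, lt_of_le_of_ne ht.2 htb⟩ hP⟩

section Lipschitz

variable {α : Type*} [PseudoMetricSpace α] {f g : ℝ → α} {K : NNReal} {s : Set ℝ}

lemma LipschitzOnWith.congr (hf : LipschitzOnWith K f s) (hfg : EqOn f g s) :
    LipschitzOnWith K g s := fun x hx y hy => by
  simpa only [hfg hx, hfg hy] using hf hx hy

lemma LipschitzOnWith.Icc_union_Icc {a b c : ℝ}
    (hab : LipschitzOnWith K f (Icc a b)) (hbc : LipschitzOnWith K f (Icc b c)) :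
    LipschitzOnWith K f (Icc a c) := by
  have key : ∀ x ∈ Icc a c, ∀ y ∈ Icc a c, x ≤ y → dist (f x) (f y) ≤ K * dist x y := by
    intro x hx y hy hxy
    rcases le_total y b with hyb | hby
    · exact hab.dist_le_mul x ⟨hx.1, hxy.trans hyb⟩ y ⟨hx.1.trans hxy, hyb⟩
    rcases le_total b x with hbx | hxb
    · exact hbc.dist_le_mul x ⟨hbx, hxy.trans hy.2⟩ y ⟨hbx.trans hxy, hy.2⟩
    calc dist (f x) (f y) ≤ dist (f x) (f b) + dist (f b) (f y) := dist_triangle _ _ _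
      _ ≤ K * dist x b + K * dist b y :=
          add_le_add (hab.dist_le_mul x ⟨hx.1, hxb⟩ b ⟨hx.1.trans hxb, le_rfl⟩)
            (hbc.dist_le_mul b ⟨le_rfl, hby.trans hy.2⟩ y ⟨hby, hy.2⟩)
      _ = K * dist x y := by
          simp only [Real.dist_eq, abs_of_nonpos (sub_nonpos.2 hxb),
            abs_of_nonpos (sub_nonpos.2 hby), abs_of_nonpos (sub_nonpos.2 hxy)]
          ring
  refine LipschitzOnWith.of_dist_le_mul fun x hx y hy => ?_
  rcases le_total x y with hxy | hyx
  · exact key x hx y hy hxy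
  · rw [dist_comm, dist_comm x]
    exact key y hy x hx hyx

end Lipschitz

lemma lipschitzOnWith_toNNReal_iff {F : Type*} [SeminormedAddCommGroup F] {f : ℝ → F} {V : ℝ}
    (hV : 0 ≤ V) {S : Set ℝ} :
    LipschitzOnWith V.toNNReal f S ↔ ∀ s ∈ S, ∀ t ∈ S, ‖f s - f t‖ ≤ V * |s - t| := by
  simp only [lipschitzOnWith_iff_dist_le_mul, dist_eq_norm, Real.norm_eq_abs,
    Real.coe_toNNReal _ hV]

lemma ContinuousOn.mem_of_mapsTo_Ico {β : Type*} [TopologicalSpace β] {g : ℝ → β} {a b : ℝ}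
    {s : Set β} (hf : ContinuousOn g (Icc a b))
    (hab : a < b) (hs : IsClosed s) (hmaps : MapsTo g (Ico a b) s) : g b ∈ s := by
  have hb : b ∈ closure (Ico a b) := by rw [closure_Ico hab.ne]; exact right_mem_Icc.2 hab.le
  simpa only [hs.closure_eq] using
    ((hf b (right_mem_Icc.2 hab.le)).mono Ico_subset_Icc_self).mem_closure hb hmaps

section Interpolation

variable {E : Type*} [NormedAddCommGroup E] [NormedSpace ℝ E] {f : ℝ → E}

-- For `a = b` the division gives `0`, so `chord f a a` is the constant `f a`.
noncomputable def chord (f : ℝ → E) (a b : ℝ) (t : ℝ) : E :=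
  AffineMap.lineMap (f a) (f b) ((t - a) / (b - a))

section Chord

variable {a b : ℝ}

@[simp] lemma chord_left : chord f a b a = f a := by simp [chord]

lemma chord_right (hab : a ≠ b) : chord f a b b = f b := by
  simp [chord, div_self (sub_ne_zero.2 hab.symm)]

lemma chord_eq_add_smul : ∃ u v : E, ∀ t, chord f a b t = u + t • v :=
  ⟨f a - (a / (b - a)) • (f b - f a), (b - a)⁻¹ • (f b - f a), fun t => by
    rw [chord, AffineMap.lineMap_apply_module']
    module⟩

lemma lipschitzWith_chord {K : NNReal} (hf : dist (f a) (f b) ≤ K * dist a b) :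
    LipschitzWith K (chord f a b) := by
  refine LipschitzWith.of_dist_le_mul fun s t => ?_
  calc dist (chord f a b s) (chord f a b t)
      = dist s t / dist a b * dist (f a) (f b) := by
        rw [chord, chord, dist_lineMap_lineMap, Real.dist_eq, Real.dist_eq, Real.dist_eq,
          ← sub_div, sub_sub_sub_cancel_right, abs_div, abs_sub_comm b]
    _ ≤ dist s t / dist a b * (K * dist a b) := by gcongr
    _ = K * (dist s t / dist a b * dist a b) := by ring
    _ ≤ K * dist s t := by
        gcongr
        rcases (dist_nonneg (x := a) (y := b)).eq_or_lt with h | h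
        · simp [← h]
        · rw [div_mul_cancel₀ _ h.ne']

lemma chord_mem {s : Set E} (hs : Convex ℝ s) (ha : f a ∈ s) (hb : f b ∈ s) {t : ℝ}
    (ht : t ∈ Icc a b) : chord f a b t ∈ s :=
  hs.lineMap_mem ha hb ⟨div_nonneg (sub_nonneg.2 ht.1) (sub_nonneg.2 (ht.1.trans ht.2)),
    div_le_one_of_le₀ (sub_le_sub_right ht.2 a) (sub_nonneg.2 (ht.1.trans ht.2))⟩

end Chord

noncomputable def linearInterp (f : ℝ → E) (ts : ℕ → ℝ) : ℕ → ℝ → E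
  | 0 => fun _ => f (ts 0)
  | n + 1 => fun t => if t ≤ ts n then linearInterp f ts n t else chord f (ts n) (ts (n + 1)) t

variable {ts : ℕ → ℝ} {n : ℕ}

lemma linearInterp_succ_of_le {t : ℝ} (ht : t ≤ ts n) :
    linearInterp f ts (n + 1) t = linearInterp f ts n t :=
  if_pos ht

lemma linearInterp_knot (hts : ∀ l < n, ts l < ts (l + 1)) :
    linearInterp f ts n (ts n) = f (ts n) := by
  cases n with
  | zero => rfl
  | succ n =>
    have hn := hts n n.lt_succ_self
    exact (if_neg hn.not_ge).trans (chord_right hn.ne)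

lemma eqOn_linearInterp_chord (hts : ∀ l < n, ts l < ts (l + 1)) {j : ℕ} (hj : j < n) :
    EqOn (linearInterp f ts n) (chord f (ts j) (ts (j + 1))) (Icc (ts j) (ts (j + 1))) := by
  induction n with
  | zero => exact absurd hj j.not_lt_zero
  | succ n ih =>
    intro t ht
    have hts' : ∀ l < n, ts l < ts (l + 1) := fun l hl => hts l (hl.trans n.lt_succ_self)
    rcases (Nat.lt_succ_iff.1 hj).lt_or_eq with hj | rfl
    · have hjn : ts (j + 1) ≤ ts n :=
        monotoneOn_Iic_of_lt_add_one hts' (mem_Iic.2 hj) (mem_Iic.2 le_rfl) hj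
      rw [linearInterp_succ_of_le (ht.2.trans hjn)]
      exact ih hts' hj ht
    · by_cases htj : t ≤ ts j
      · obtain rfl := le_antisymm htj ht.1
        rw [linearInterp_succ_of_le le_rfl, linearInterp_knot hts', chord_left]
      · exact if_neg htj

lemma lipschitzOnWith_linearInterp {K : NNReal} (hts : ∀ l < n, ts l < ts (l + 1))
    (hf : LipschitzOnWith K f (Icc (ts 0) (ts n))) :
    LipschitzOnWith K (linearInterp f ts n) (Icc (ts 0) (ts n)) := by
  induction n with
  | zero => exact (LipschitzWith.const' _).lipschitzOnWith
  | succ n ih =>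
    have hts' : ∀ l < n, ts l < ts (l + 1) := fun l hl => hts l (hl.trans n.lt_succ_self)
    have hn := hts n n.lt_succ_self
    have h0n : ts 0 ≤ ts n := monotoneOn_Iic_of_lt_add_one hts' (mem_Iic.2 n.zero_le)
      (mem_Iic.2 le_rfl) n.zero_le
    refine LipschitzOnWith.Icc_union_Icc (b := ts n) ?_ ?_
    · exact (ih hts' (hf.mono (Icc_subset_Icc_right hn.le))).congr
        fun t ht => (linearInterp_succ_of_le ht.2).symm
    · have hchord := lipschitzWith_chord (f := f)
        (hf.dist_le_mul _ ⟨h0n, hn.le⟩ _ ⟨h0n.trans hn.le, le_rfl⟩)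
      exact hchord.lipschitzOnWith.congr (eqOn_linearInterp_chord hts n.lt_succ_self).symm

lemma exists_mem_Ico_knots (hts : ∀ l < n, ts l < ts (l + 1)) {t : ℝ}
    (ht : t ∈ Ico (ts 0) (ts n)) : ∃ j < n, t ∈ Ico (ts j) (ts (j + 1)) := by
  induction n with
  | zero => exact absurd ht (by simp)
  | succ n ih =>
    by_cases htn : t < ts n
    · obtain ⟨j, hj, htj⟩ := ih (fun l hl => hts l (hl.trans n.lt_succ_self)) ⟨ht.1, htn⟩
      exact ⟨j, hj.trans n.lt_succ_self, htj⟩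
    · exact ⟨n, n.lt_succ_self, not_lt.1 htn, ht.2⟩

lemma linearInterp_mem {s : Set E} (hts : ∀ l < n, ts l < ts (l + 1))
    (hf : ContinuousOn f (Icc (ts 0) (ts n))) (hs : Convex ℝ s) (hs' : IsClosed s)
    (hconst : ∀ l < n, ∀ t₁ ∈ Ico (ts l) (ts (l + 1)), ∀ t₂ ∈ Ico (ts l) (ts (l + 1)),
      f t₁ ∈ s → f t₂ ∈ s)
    {t : ℝ} (ht : t ∈ Ico (ts 0) (ts n)) (hft : f t ∈ s) : linearInterp f ts n t ∈ s := by
  obtain ⟨j, hj, htj⟩ := exists_mem_Ico_knots hts ht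
  have hmono := monotoneOn_Iic_of_lt_add_one hts
  have hmaps : MapsTo f (Ico (ts j) (ts (j + 1))) s := fun r hr => hconst j hj t htj r hr hft
  have hsub : Icc (ts j) (ts (j + 1)) ⊆ Icc (ts 0) (ts n) :=
    Icc_subset_Icc (hmono (mem_Iic.2 n.zero_le) (mem_Iic.2 hj.le) j.zero_le)
      (hmono (mem_Iic.2 hj) (mem_Iic.2 le_rfl) hj)
  rw [eqOn_linearInterp_chord hts hj (Ico_subset_Icc_self htj)]
  exact chord_mem hs (hmaps (left_mem_Ico.2 (hts j hj)))
    ((hf.mono hsub).mem_of_mapsTo_Ico (hts j hj) hs' hmaps) (Ico_subset_Icc_self htj)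

end Interpolation

theorem trajectory_piecewise_linear_wlog_general
    (K : ℕ) (w : Fin K → EuclideanSpace ℝ (Fin 2))
    (D Tmin V T : ℝ) (hV : 0 < V) (hT : 0 < T)
    (q : ℝ → EuclideanSpace ℝ (Fin 2))
    (hLip : ∀ s ∈ Set.Icc 0 T, ∀ t ∈ Set.Icc 0 T, ‖q s - q t‖ ≤ V * |s - t|)
    (hconn : ∀ k : Fin K,
      ENNReal.ofReal Tmin ≤ volume {t ∈ Set.Icc 0 T | ‖q t - w k‖ ≤ D})
    (hpiece : ∃ L : ℕ, ∃ ts : ℕ → ℝ, ts 0 = 0 ∧ ts (L + 1) = T ∧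
      (∀ l ≤ L, ts l < ts (l + 1)) ∧
      (∀ l ≤ L, ∀ s₁ ∈ Set.Ico (ts l) (ts (l + 1)), ∀ s₂ ∈ Set.Ico (ts l) (ts (l + 1)),
        {k : Fin K | ‖q s₁ - w k‖ ≤ D} = {k : Fin K | ‖q s₂ - w k‖ ≤ D})) :
    ∃ That ∈ Set.Ioc (0 : ℝ) T, ∃ qhat : ℝ → EuclideanSpace ℝ (Fin 2),
      (∀ s ∈ Set.Icc 0 That, ∀ t ∈ Set.Icc 0 That, ‖qhat s - qhat t‖ ≤ V * |s - t|) ∧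
      (∃ J : ℕ, ∃ ss : ℕ → ℝ, ss 0 = 0 ∧ ss J = That ∧
        (∀ j < J, ss j < ss (j + 1)) ∧
        (∀ j < J, ∃ u v : EuclideanSpace ℝ (Fin 2),
          ∀ t ∈ Set.Icc (ss j) (ss (j + 1)), qhat t = u + t • v)) ∧
      (∀ k : Fin K,
        ENNReal.ofReal Tmin ≤ volume {t ∈ Set.Icc 0 That | ‖qhat t - w k‖ ≤ D}) := by
  obtain ⟨L, ts, hts0, htsT, hlt, hconst⟩ := hpiece
  have hts : ∀ l < L + 1, ts l < ts (l + 1) := fun l hl => hlt l (Nat.lt_succ_iff.1 hl)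
  have hq : LipschitzOnWith V.toNNReal q (Icc (ts 0) (ts (L + 1))) := by
    rw [hts0, htsT]
    exact (lipschitzOnWith_toNNReal_iff hV.le).2 hLip
  refine ⟨T, ⟨hT, le_rfl⟩, linearInterp q ts (L + 1), ?_,
    ⟨L + 1, ts, hts0, htsT, hts, fun j hj => ?_⟩, fun k => ?_⟩
  · rw [← lipschitzOnWith_toNNReal_iff hV.le, ← hts0, ← htsT]
    exact lipschitzOnWith_linearInterp hts hq
  · obtain ⟨u, v, huv⟩ := chord_eq_add_smul (f := q) (a := ts j) (b := ts (j + 1))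
    exact ⟨u, v, fun t ht => (eqOn_linearInterp_chord hts hj ht).trans (huv t)⟩
  · refine (hconn k).trans (volume_sep_Icc_mono fun t ht hqt => ?_)
    rw [← hts0, ← htsT] at ht
    simp only [← mem_closedBall_iff_norm] at hqt ⊢
    refine linearInterp_mem hts hq.continuousOn (convex_closedBall _ _)
      Metric.isClosed_closedBall (fun l hl t₁ ht₁ t₂ ht₂ => ?_) ht hqt
    simpa only [mem_closedBall_iff_norm, mem_ofPred_eq] using
      (Set.ext_iff.1 (hconst l (Nat.lt_succ_iff.1 hl) t₁ ht₁ t₂ ht₂) k).1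

/-- **Theorem 2 of the paper.** Consider ground terminals `w k ∈ ℝ²`, a connection
distance `D ≥ 0`, a minimum connection time `T_min ≥ 0`, a maximum speed `V > 0`,
and a mission time `T > 0`.  Suppose the trajectory `q : [0,T] → ℝ²` is
`V`-Lipschitz, the Lebesgue measure of the connection time
`{t ∈ [0,T] : ‖q t - w k‖ ≤ D}` of each terminal `k` is at least `T_min`, and the
set of connected terminals `{k : ‖q t - w k‖ ≤ D}` changes only at finitely many
times `0 = t₀ < t₁ < ⋯ < t_{L+1} = T` (being constant on each `[t_{l-1}, t_l)`).
Then there exist a duration `T̂ ∈ (0, T]` and a trajectory `q̂ : [0, T̂] → ℝ²` that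
is `V`-Lipschitz and piecewise affine (affine on each interval of a finite partition
`0 = s₀ < s₁ < ⋯ < s_J = T̂`) such that every terminal's connection time under `q̂`
is still at least `T_min`. -/
theorem trajectory_piecewise_linear_wlog
    (K : ℕ) (w : Fin K → EuclideanSpace ℝ (Fin 2))
    (D Tmin V T : ℝ) (hD : 0 ≤ D) (hTmin : 0 ≤ Tmin) (hV : 0 < V) (hT : 0 < T)
    (q : ℝ → EuclideanSpace ℝ (Fin 2))
    (hLip : ∀ s ∈ Set.Icc 0 T, ∀ t ∈ Set.Icc 0 T, ‖q s - q t‖ ≤ V * |s - t|)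
    (hconn : ∀ k : Fin K,
      ENNReal.ofReal Tmin ≤ volume {t ∈ Set.Icc 0 T | ‖q t - w k‖ ≤ D})
    (hpiece : ∃ L : ℕ, ∃ ts : ℕ → ℝ, ts 0 = 0 ∧ ts (L + 1) = T ∧
      (∀ l ≤ L, ts l < ts (l + 1)) ∧
      (∀ l ≤ L, ∀ s₁ ∈ Set.Ico (ts l) (ts (l + 1)), ∀ s₂ ∈ Set.Ico (ts l) (ts (l + 1)),
        {k : Fin K | ‖q s₁ - w k‖ ≤ D} = {k : Fin K | ‖q s₂ - w k‖ ≤ D})) :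
    ∃ That ∈ Set.Ioc (0 : ℝ) T, ∃ qhat : ℝ → EuclideanSpace ℝ (Fin 2),
      (∀ s ∈ Set.Icc 0 That, ∀ t ∈ Set.Icc 0 That, ‖qhat s - qhat t‖ ≤ V * |s - t|) ∧
      (∃ J : ℕ, ∃ ss : ℕ → ℝ, ss 0 = 0 ∧ ss J = That ∧
        (∀ j < J, ss j < ss (j + 1)) ∧
        (∀ j < J, ∃ u v : EuclideanSpace ℝ (Fin 2),
          ∀ t ∈ Set.Icc (ss j) (ss (j + 1)), qhat t = u + t • v)) ∧
      (∀ k : Fin K,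
        ENNReal.ofReal Tmin ≤ volume {t ∈ Set.Icc 0 That | ‖qhat t - w k‖ ≤ D}) :=
  trajectory_piecewise_linear_wlog_general K w D Tmin V T hV hT q hLip hconn hpiece
end
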